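/- arXiv:1906.04732 — 2 statements merged into one kernel-verified Lean document; each statement's English description precedes it below -/
import Mathlib

section
/- Let $A_k : X \to Y$ ($k \in \mathbb{N}$) and $A : X \to Y$ be bounded linear operators with $A_k^* y \to A^* y$ strongly in $X$ for every $y \in Y$, and let $b_k \to b$ strongly in $Y$. Let $Z = A f_0 + b$ for some $f_0 \in X$ and let $f^\dagger$ be the $f^*$-minimum-norm solution. Let $\delta_k > 0$ and $\rho_k > 0$ satisfy $\delta_k \to 0$, $\rho_k \to 0$, $\delta_k^2/\rho_k \to 0$ and $\omega_k/\rho_k \to 0$, where $\omega_k := \|A_k f^\dagger + b_k - (A f^\dagger + b)\|_Y^2$. Let $z_k \in Y$ with $\|z_k - Z\|_Y \le \delta_k$ and let $f_k$ be the unique minimizer over $X$ of $f \mapsto \|A_k f + b_k - z_k\|_Y^2 + \rho_k \|f - f^*\|_X^2$. Then $\|f_k - f^\dagger\|_X \to 0$ as $k \to \infty$. -/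
/-!
Testing the minimality of `fk k` against `fdag` gives
`‖fk k - fstar‖² ≤ ‖fdag - fstar‖² + ε k` with `ε k → 0`, and forces the residuals
`Ak k (fk k) + bk k - zk k` to vanish. So `fk` is bounded and `⟪fk k, A† y⟫ → ⟪fdag, A† y⟫`
for every `y`. Being the `fstar`-minimum-norm solution, `fdag - fstar` is orthogonal to `ker A`,
i.e. it lies in the closure of `range A†`; boundedness extends the convergence of inner products
to it. Expanding `‖fk k - fstar‖²` around `fdag` then gives
`‖fk k - fdag‖² ≤ ε k - 2 ⟪fk k - fdag, fdag - fstar⟫ → 0`.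
-/

open Filter
open scoped Topology RealInnerProductSpace InnerProduct

section Normed

variable {ι F : Type*} [SeminormedAddCommGroup F] {l : Filter ι}

lemma tendsto_zero_of_norm_sq_le {x : ι → F} {g : ι → ℝ} (hg : Tendsto g l (𝓝 0))
    (h : ∀ i, ‖x i‖ ^ 2 ≤ g i) : Tendsto x l (𝓝 0) :=
  squeeze_zero_norm (fun i => by simpa using Real.abs_le_sqrt (h i)) (by simpa using hg.sqrt)

lemma exists_forall_norm_le_of_norm_sub_sq_le {x : ι → F} {a : F} {g : ι → ℝ}
    (hg : BddAbove (Set.range g)) (h : ∀ i, ‖x i - a‖ ^ 2 ≤ g i) : ∃ M, ∀ i, ‖x i‖ ≤ M := by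
  obtain ⟨C, hC⟩ := hg
  refine ⟨‖a‖ + C + 1, fun i => ?_⟩
  nlinarith [norm_le_norm_add_norm_sub' (x i) a, h i, hC ⟨i, rfl⟩, sq_nonneg (‖x i - a‖ - 1)]

lemma tendsto_norm_add_sq_div_of_norm_le {w e : ι → F} {δ ρ : ι → ℝ} (hρ : ∀ i, 0 < ρ i)
    (he : ∀ i, ‖e i‖ ≤ δ i) (hw : Tendsto (fun i => ‖w i‖ ^ 2 / ρ i) l (𝓝 0))
    (hδ : Tendsto (fun i => δ i ^ 2 / ρ i) l (𝓝 0)) :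
    Tendsto (fun i => ‖w i + e i‖ ^ 2 / ρ i) l (𝓝 0) := by
  refine squeeze_zero (fun i => div_nonneg (sq_nonneg _) (hρ i).le) (fun i => ?_)
    (by simpa using (hw.add hδ).const_mul 2)
  have hle : ‖w i + e i‖ ≤ ‖w i‖ + δ i := (norm_add_le _ _).trans (by linarith [he i])
  rw [← add_div, mul_div_assoc']
  refine div_le_div_of_nonneg_right ?_ (hρ i).le
  exact (pow_le_pow_left₀ (norm_nonneg _) hle 2).trans add_sq_le

end Normed

section InnerProductSpace

variable {ι E : Type*} [NormedAddCommGroup E] [InnerProductSpace ℝ E] {l : Filter ι}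

lemma tendsto_of_norm_sub_sq_le_of_tendsto_inner {x : ι → E} {a b : E} {ε : ι → ℝ}
    (hε : Tendsto ε l (𝓝 0)) (hx : ∀ i, ‖x i - a‖ ^ 2 ≤ ‖b - a‖ ^ 2 + ε i)
    (hinner : Tendsto (fun i => ⟪x i, b - a⟫) l (𝓝 ⟪b, b - a⟫)) : Tendsto x l (𝓝 b) := by
  refine tendsto_sub_nhds_zero_iff.1 <| tendsto_zero_of_norm_sq_le
    (g := fun i => ε i - 2 * (⟪x i, b - a⟫ - ⟪b, b - a⟫)) ?_ fun i => ?_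
  · simpa using hε.sub ((hinner.sub_const ⟪b, b - a⟫).const_mul 2)
  · have hsplit : ‖x i - a‖ ^ 2 = ‖x i - b‖ ^ 2 + 2 * ⟪x i - b, b - a⟫ + ‖b - a‖ ^ 2 := by
      rw [← norm_add_sq_real, sub_add_sub_cancel]
    rw [inner_sub_left] at hsplit
    linarith [hx i]

lemma tendsto_inner_of_mem_closure {x : ι → E} {M : ℝ} (hx : ∀ i, ‖x i‖ ≤ M) {x₀ : E}
    {S : Set E} (hS : ∀ u ∈ S, Tendsto (fun i => ⟪x i, u⟫) l (𝓝 ⟪x₀, u⟫)) {v : E}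
    (hv : v ∈ closure S) : Tendsto (fun i => ⟪x i, v⟫) l (𝓝 ⟪x₀, v⟫) := by
  have hequi : Equicontinuous fun i (u : E) => ⟪x i, u⟫ :=
    ((NormedSpace.equicontinuous_TFAE fun i => innerSL ℝ (x i)).out 5 1).mp
      (⟨M, fun i => (innerSL_apply_norm ℝ (x i)).trans_le (hx i)⟩ :
        ∃ C, ∀ i, ‖innerSL ℝ (x i)‖ ≤ C)
  exact (hequi v).tendsto_of_mem_closure
    ((continuous_const.inner continuous_id).tendsto v |>.mono_left nhdsWithin_le_nhds) hS hv

lemma Submodule.mem_orthogonal_of_forall_norm_le_norm_sub (K : Submodule ℝ E) {v : E}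
    (h : ∀ w ∈ K, ‖v‖ ≤ ‖v - w‖) : v ∈ Kᗮ := by
  have hinf : ‖v - 0‖ = ⨅ w : (K : Set E), ‖v - w‖ := by
    refine le_antisymm (le_ciInf fun w => by simpa using h w w.2) ?_
    exact (ciInf_le (f := fun w : (K : Set E) => ‖v - w‖) ⟨0, by rintro _ ⟨w, rfl⟩; positivity⟩
      ⟨0, K.zero_mem⟩).trans (by simp)
  rw [Submodule.mem_orthogonal']
  intro w hw
  simpa using (norm_eq_iInf_iff_real_inner_eq_zero K K.zero_mem).1 hinf w hw

end InnerProductSpace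

section Adjoint

variable {ι X Y : Type*} [NormedAddCommGroup X] [InnerProductSpace ℝ X] [CompleteSpace X]
  [NormedAddCommGroup Y] [InnerProductSpace ℝ Y] [CompleteSpace Y]

lemma tendsto_inner_adjoint_of_tendsto_apply {l : Filter ι} {A : X →L[ℝ] Y} {B : ι → X →L[ℝ] Y}
    (hB : ∀ y, Tendsto (fun i => ((B i)†) y) l (𝓝 ((A†) y))) {x : ι → X}
    (hx : IsBoundedUnder (· ≤ ·) l fun i => ‖x i‖) {x₀ : X}
    (hBx : Tendsto (fun i => B i (x i)) l (𝓝 (A x₀))) (y : Y) :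
    Tendsto (fun i => ⟪x i, (A†) y⟫) l (𝓝 ⟪x₀, (A†) y⟫) := by
  have hsplit : ∀ i, ⟪x i, (A†) y - ((B i)†) y⟫ + ⟪B i (x i), y⟫ = ⟪x i, (A†) y⟫ := fun i => by
    simp only [inner_sub_right, ContinuousLinearMap.adjoint_inner_right]; ring
  have hdefect : Tendsto (fun i => ⟪x i, (A†) y - ((B i)†) y⟫) l (𝓝 0) :=
    (by simpa using (hB y).const_sub ((A†) y) : Tendsto (fun i => (A†) y - ((B i)†) y) l (𝓝 0))
      |>.op_zero_isBoundedUnder_le hx (fun a u => ⟪u, a⟫)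
        fun a u => (norm_inner_le_norm u a).trans_eq (mul_comm _ _)
  have := (hdefect.add (hBx.inner (tendsto_const_nhds (x := y)))).congr hsplit
  rwa [zero_add, ← ContinuousLinearMap.adjoint_inner_right] at this

lemma sub_mem_closure_range_adjoint_of_forall_norm_le {A : X →L[ℝ] Y} {b Z : Y} {fstar fdag : X}
    (hsol : A fdag + b = Z) (hmin : ∀ f, A f + b = Z → ‖fdag - fstar‖ ≤ ‖f - fstar‖) :
    fdag - fstar ∈ closure (Set.range (A† : Y → X)) := by
  have hker : fdag - fstar ∈ (LinearMap.ker (A : X →ₗ[ℝ] Y))ᗮ :=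
    (LinearMap.ker (A : X →ₗ[ℝ] Y)).mem_orthogonal_of_forall_norm_le_norm_sub fun w hw =>
      (hmin (fdag - w) (by rw [map_sub, show A w = 0 from hw, sub_zero, hsol])).trans_eq
        (by rw [sub_right_comm])
  rw [A.orthogonal_ker] at hker
  rwa [← SetLike.mem_coe, Submodule.topologicalClosure_coe, LinearMap.coe_range] at hker

end Adjoint

theorem tikhonov_convergence_to_minimum_norm_solution_general
    {X Y : Type*} [NormedAddCommGroup X] [InnerProductSpace ℝ X] [CompleteSpace X]
    [NormedAddCommGroup Y] [InnerProductSpace ℝ Y] [CompleteSpace Y]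
    (A : X →L[ℝ] Y) (b : Y) (fstar : X) (Z : Y)
    (fdag : X) (hdagSol : A fdag + b = Z)
    (hdagMin : ∀ f : X, A f + b = Z → ‖fdag - fstar‖ ≤ ‖f - fstar‖)
    (Ak : ℕ → X →L[ℝ] Y)
    (hA : ∀ y : Y, Tendsto (fun k => (ContinuousLinearMap.adjoint (Ak k)) y) atTop
      (𝓝 ((ContinuousLinearMap.adjoint A) y)))
    (bk : ℕ → Y) (hb : Tendsto bk atTop (𝓝 b))
    (δk ρk : ℕ → ℝ) (hρpos : ∀ k, 0 < ρk k)
    (hδ0 : Tendsto δk atTop (𝓝 0)) (hρ0 : Tendsto ρk atTop (𝓝 0))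
    (hδρ : Tendsto (fun k => δk k ^ 2 / ρk k) atTop (𝓝 0))
    (hωρ : Tendsto (fun k => ‖Ak k fdag + bk k - (A fdag + b)‖ ^ 2 / ρk k) atTop (𝓝 0))
    (zk : ℕ → Y) (hz : ∀ k, ‖zk k - Z‖ ≤ δk k)
    (fk : ℕ → X)
    (hmin : ∀ k, ∀ f : X,
      ‖Ak k (fk k) + bk k - zk k‖ ^ 2 + ρk k * ‖fk k - fstar‖ ^ 2 ≤
        ‖Ak k f + bk k - zk k‖ ^ 2 + ρk k * ‖f - fstar‖ ^ 2) :
    Tendsto (fun k => ‖fk k - fdag‖) atTop (𝓝 0) := by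
  set ε : ℕ → ℝ := fun k => ‖Ak k fdag + bk k - zk k‖ ^ 2 / ρk k
  have hε : Tendsto ε atTop (𝓝 0) := by
    refine (tendsto_norm_add_sq_div_of_norm_le hρpos (e := fun k => Z - zk k)
      (fun k => (norm_sub_rev _ _).trans_le (hz k)) hωρ hδρ).congr fun k => ?_
    simp only [ε, hdagSol, sub_add_sub_cancel]
  have hnorm : ∀ k, ‖fk k - fstar‖ ^ 2 ≤ ‖fdag - fstar‖ ^ 2 + ε k := fun k => by
    rw [← sub_le_iff_le_add', le_div_iff₀ (hρpos k)]
    nlinarith [hmin k fdag, sq_nonneg ‖Ak k (fk k) + bk k - zk k‖]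
  have hresidual : Tendsto (fun k => Ak k (fk k) + bk k - zk k) atTop (𝓝 0) := by
    refine tendsto_zero_of_norm_sq_le (by simpa using hρ0.mul (hε.const_add (‖fdag - fstar‖ ^ 2)))
      fun k => ?_
    rw [mul_add, mul_div_cancel₀ _ (hρpos k).ne']
    nlinarith [hmin k fdag, mul_nonneg (hρpos k).le (sq_nonneg ‖fk k - fstar‖)]
  have hAfk : Tendsto (fun k => Ak k (fk k)) atTop (𝓝 (A fdag)) := by
    have hzk := tendsto_iff_norm_sub_tendsto_zero.2 (squeeze_zero (fun k => norm_nonneg _) hz hδ0)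
    have := (hresidual.sub hb).add hzk
    rw [zero_sub, neg_add_eq_sub, ← hdagSol, add_sub_cancel_right] at this
    exact this.congr fun k => by abel
  obtain ⟨M, hM⟩ :=
    exists_forall_norm_le_of_norm_sub_sq_le (hε.const_add (‖fdag - fstar‖ ^ 2)).bddAbove_range hnorm
  refine tendsto_iff_norm_sub_tendsto_zero.1
    (tendsto_of_norm_sub_sq_le_of_tendsto_inner hε hnorm ?_)
  refine tendsto_inner_of_mem_closure hM ?_
    (sub_mem_closure_range_adjoint_of_forall_norm_le hdagSol hdagMin)
  rintro _ ⟨y, rfl⟩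
  exact tendsto_inner_adjoint_of_tendsto_apply hA (isBoundedUnder_of ⟨M, hM⟩) hAfk y

/-- Convergence of the regularized discrete approximations: under pointwise
convergence of the adjoints `A_k* y → A* y`, `b_k → b`, attainable exact data
`Z = A f₀ + b`, noise levels `δ_k → 0`, regularization parameters `ρ_k → 0` with
`δ_k²/ρ_k → 0` and `ω_k/ρ_k → 0` (where `ω_k = ‖A_k f† + b_k - (A f† + b)‖²`),
noisy data `‖z_k - Z‖ ≤ δ_k`, and minimizers `f_k` of the Tikhonov functionals,
the sequence `f_k` converges strongly to the `f*`-minimum-norm solution `f†`. -/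
theorem tikhonov_convergence_to_minimum_norm_solution
    {X Y : Type*} [NormedAddCommGroup X] [InnerProductSpace ℝ X] [CompleteSpace X]
    [NormedAddCommGroup Y] [InnerProductSpace ℝ Y] [CompleteSpace Y]
    (A : X →L[ℝ] Y) (b : Y) (fstar : X) (Z : Y) (f0 : X) (hZ : A f0 + b = Z)
    (fdag : X) (hdagSol : A fdag + b = Z)
    (hdagMin : ∀ f : X, A f + b = Z → ‖fdag - fstar‖ ≤ ‖f - fstar‖)
    (Ak : ℕ → X →L[ℝ] Y)
    (hA : ∀ y : Y, Tendsto (fun k => (ContinuousLinearMap.adjoint (Ak k)) y) atTop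
      (𝓝 ((ContinuousLinearMap.adjoint A) y)))
    (bk : ℕ → Y) (hb : Tendsto bk atTop (𝓝 b))
    (δk ρk : ℕ → ℝ) (hδpos : ∀ k, 0 < δk k) (hρpos : ∀ k, 0 < ρk k)
    (hδ0 : Tendsto δk atTop (𝓝 0)) (hρ0 : Tendsto ρk atTop (𝓝 0))
    (hδρ : Tendsto (fun k => δk k ^ 2 / ρk k) atTop (𝓝 0))
    (hωρ : Tendsto (fun k => ‖Ak k fdag + bk k - (A fdag + b)‖ ^ 2 / ρk k) atTop (𝓝 0))
    (zk : ℕ → Y) (hz : ∀ k, ‖zk k - Z‖ ≤ δk k)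
    (fk : ℕ → X)
    (hmin : ∀ k, ∀ f : X,
      ‖Ak k (fk k) + bk k - zk k‖ ^ 2 + ρk k * ‖fk k - fstar‖ ^ 2 ≤
        ‖Ak k f + bk k - zk k‖ ^ 2 + ρk k * ‖f - fstar‖ ^ 2) :
    Tendsto (fun k => ‖fk k - fdag‖) atTop (𝓝 0) :=
  tikhonov_convergence_to_minimum_norm_solution_general A b fstar Z fdag hdagSol hdagMin Ak hA bk hb
    δk ρk hρpos hδ0 hρ0 hδρ hωρ zk hz fk hmin
end

section
/- Under the hypotheses of the convergence theorem (operators $A_k$ with $A_k^* y \to A^* y$ for all $y$, offsets $b_k \to b$, noise levels $\delta_k \to 0$, regularization parameters $\rho_k \to 0$ with $\delta_k^2/\rho_k \to 0$ and $\omega_k/\rho_k \to 0$ where $\omega_k := \|A_k f^\dagger + b_k - (A f^\dagger + b)\|_Y^2$, data $\|z_k - Z\|_Y \le \delta_k$, and $f_k$ the minimizer of $f \mapsto \|A_k f + b_k - z_k\|_Y^2 + \rho_k \|f - f^*\|_X^2$), the residuals satisfy $\lim_{k\to\infty} \|A_k f_k + b_k - z_k\|_Y = 0$ and $\limsup_{k\to\infty}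 \|f_k - f^*\|_X \le \|f^\dagger - f^*\|_X$. -/
open Filter
open scoped Topology

/-- Convergence of the regularized discrete approximations: under pointwise
convergence of the adjoints `A_k* y → A* y`, `b_k → b`, attainable exact data
`Z = A f₀ + b`, noise levels `δ_k → 0`, regularization parameters `ρ_k → 0` with
`δ_k²/ρ_k → 0` and `ω_k/ρ_k → 0` (where `ω_k = ‖A_k f† + b_k - (A f† + b)‖²`),
noisy data `‖z_k - Z‖ ≤ δ_k`, and minimizers `f_k` of the Tikhonov functionals,
the residuals satisfy `‖A_k f_k + b_k - z_k‖ → 0` and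
`limsup ‖f_k - f*‖ ≤ ‖f† - f*‖`. -/
theorem tikhonov_residual_and_norm_limits
    {X Y : Type*} [NormedAddCommGroup X] [InnerProductSpace ℝ X] [CompleteSpace X]
    [NormedAddCommGroup Y] [InnerProductSpace ℝ Y] [CompleteSpace Y]
    (A : X →L[ℝ] Y) (b : Y) (fstar : X) (Z : Y) (f0 : X) (hZ : A f0 + b = Z)
    (fdag : X) (hdagSol : A fdag + b = Z)
    (hdagMin : ∀ f : X, A f + b = Z → ‖fdag - fstar‖ ≤ ‖f - fstar‖)
    (Ak : ℕ → X →L[ℝ] Y)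
    (hA : ∀ y : Y, Tendsto (fun k => (ContinuousLinearMap.adjoint (Ak k)) y) atTop
      (𝓝 ((ContinuousLinearMap.adjoint A) y)))
    (bk : ℕ → Y) (hb : Tendsto bk atTop (𝓝 b))
    (δk ρk : ℕ → ℝ) (hδpos : ∀ k, 0 < δk k) (hρpos : ∀ k, 0 < ρk k)
    (hδ0 : Tendsto δk atTop (𝓝 0)) (hρ0 : Tendsto ρk atTop (𝓝 0))
    (hδρ : Tendsto (fun k => δk k ^ 2 / ρk k) atTop (𝓝 0))
    (hωρ : Tendsto (fun k => ‖Ak k fdag + bk k - (A fdag + b)‖ ^ 2 / ρk k) atTop (𝓝 0))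
    (zk : ℕ → Y) (hz : ∀ k, ‖zk k - Z‖ ≤ δk k)
    (fk : ℕ → X)
    (hmin : ∀ k, ∀ f : X,
      ‖Ak k (fk k) + bk k - zk k‖ ^ 2 + ρk k * ‖fk k - fstar‖ ^ 2 ≤
        ‖Ak k f + bk k - zk k‖ ^ 2 + ρk k * ‖f - fstar‖ ^ 2) :
    Tendsto (fun k => ‖Ak k (fk k) + bk k - zk k‖) atTop (𝓝 0) ∧
      atTop.limsup (fun k => ‖fk k - fstar‖) ≤ ‖fdag - fstar‖ := by
  set w : ℕ → ℝ := fun k => ‖Ak k fdag + bk k - (A fdag + b)‖ with hw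
  set C : ℝ := ‖fdag - fstar‖ with hC
  -- key estimate: ‖A_k f† + b_k - z_k‖² ≤ 2 w² + 2 δ²
  have hkey : ∀ k, ‖Ak k fdag + bk k - zk k‖ ^ 2 ≤ 2 * w k ^ 2 + 2 * δk k ^ 2 := by
    intro k
    have h1 : ‖Ak k fdag + bk k - zk k‖ ≤ w k + δk k := by
      have : Ak k fdag + bk k - zk k = (Ak k fdag + bk k - (A fdag + b)) + (Z - zk k) := by
        rw [hdagSol]; abel
      rw [this]
      refine (norm_add_le _ _).trans (add_le_add le_rfl ?_)
      rw [norm_sub_rev]; exact hz k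
    have h2 : ‖Ak k fdag + bk k - zk k‖ ^ 2 ≤ (w k + δk k) ^ 2 := by
      exact pow_le_pow_left₀ (norm_nonneg _) h1 2
    nlinarith [sq_nonneg (w k - δk k)]
  -- bounds from minimality
  have hres : ∀ k, ‖Ak k (fk k) + bk k - zk k‖ ^ 2 ≤
      2 * w k ^ 2 + 2 * δk k ^ 2 + ρk k * C ^ 2 := by
    intro k
    have := hmin k fdag
    nlinarith [mul_nonneg (hρpos k).le (sq_nonneg ‖fk k - fstar‖), hkey k]
  have hnorm : ∀ k, ‖fk k - fstar‖ ^ 2 ≤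
      2 * (w k ^ 2 / ρk k) + 2 * (δk k ^ 2 / ρk k) + C ^ 2 := by
    intro k
    have hmin' := hmin k fdag
    have hk := hkey k
    have hρ := hρpos k
    have : ρk k * ‖fk k - fstar‖ ^ 2 ≤ 2 * w k ^ 2 + 2 * δk k ^ 2 + ρk k * C ^ 2 := by
      nlinarith [sq_nonneg ‖Ak k (fk k) + bk k - zk k‖]
    have h2 : ‖fk k - fstar‖ ^ 2 ≤ (2 * w k ^ 2 + 2 * δk k ^ 2 + ρk k * C ^ 2) / ρk k :=
      (le_div_iff₀ hρ).2 (by linarith [this])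
    calc ‖fk k - fstar‖ ^ 2 ≤ (2 * w k ^ 2 + 2 * δk k ^ 2 + ρk k * C ^ 2) / ρk k := h2
      _ = 2 * (w k ^ 2 / ρk k) + 2 * (δk k ^ 2 / ρk k) + C ^ 2 := by
          field_simp
  -- limits of auxiliary sequences
  have hw2 : Tendsto (fun k => w k ^ 2) atTop (𝓝 0) := by
    have : (fun k => w k ^ 2) = fun k => (w k ^ 2 / ρk k) * ρk k := by
      funext k; rw [div_mul_cancel₀ _ (hρpos k).ne']
    rw [this]
    simpa using hωρ.mul hρ0
  have hδ2 : Tendsto (fun k => δk k ^ 2) atTop (𝓝 0) := by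
    simpa using hδ0.pow 2
  have hR : Tendsto (fun k => 2 * w k ^ 2 + 2 * δk k ^ 2 + ρk k * C ^ 2) atTop (𝓝 0) := by
    have := ((hw2.const_mul 2).add (hδ2.const_mul 2)).add (hρ0.mul_const (C ^ 2))
    simpa using this
  constructor
  · -- residual → 0
    refine tendsto_of_tendsto_of_tendsto_of_le_of_le (g := fun _ => (0:ℝ))
      (h := fun k => Real.sqrt (2 * w k ^ 2 + 2 * δk k ^ 2 + ρk k * C ^ 2))
      tendsto_const_nhds ?_ (fun k => norm_nonneg _) ?_
    · have := hR.sqrt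
      simpa using this
    · intro k
      show ‖Ak k (fk k) + bk k - zk k‖ ≤ _
      rw [← Real.sqrt_sq (norm_nonneg (Ak k (fk k) + bk k - zk k))]
      exact Real.sqrt_le_sqrt (hres k)
  · -- limsup bound
    have hle : ∀ k, ‖fk k - fstar‖ ≤
        Real.sqrt (2 * (w k ^ 2 / ρk k) + 2 * (δk k ^ 2 / ρk k) + C ^ 2) := by
      intro k
      rw [← Real.sqrt_sq (norm_nonneg (fk k - fstar))]
      exact Real.sqrt_le_sqrt (hnorm k)
    have hG : Tendsto (fun k => Real.sqrt (2 * (w k ^ 2 / ρk k) + 2 * (δk k ^ 2 / ρk k) + C ^ 2))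
        atTop (𝓝 C) := by
      have h1 : Tendsto (fun k => 2 * (w k ^ 2 / ρk k) + 2 * (δk k ^ 2 / ρk k) + C ^ 2)
          atTop (𝓝 (C ^ 2)) := by
        have := ((hωρ.const_mul 2).add (hδρ.const_mul 2)).add
          (tendsto_const_nhds (x := C ^ 2) (f := atTop))
        simpa using this
      have := h1.sqrt
      rwa [Real.sqrt_sq (norm_nonneg _)] at this
    calc atTop.limsup (fun k => ‖fk k - fstar‖)
        ≤ atTop.limsup (fun k => Real.sqrt (2 * (w k ^ 2 / ρk k) + 2 * (δk k ^ 2 / ρk k) + C ^ 2)) := by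
          refine limsup_le_limsup (Eventually.of_forall hle) ?_ ?_
          · exact IsBoundedUnder.isCoboundedUnder_le
              ⟨0, eventually_map.2 (Eventually.of_forall fun k => norm_nonneg _)⟩
          · exact hG.isBoundedUnder_le
      _ = C := hG.limsup_eq
end
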